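/- Let d ≥ 1 be an integer and consider the polynomial with rational coefficients Q(t) := (2t/(2d−1)) · ∏_{j=1}^{2d−2} (t + j − (2d−1)/2)/j, which equals R(t − (2d−1)/2) where R(k) := ((2k+2d−1)/(2d−1)) · ∏_{j=1}^{2d−2} (k+j)/j is the multiplicity polynomial of the k-th Laplace eigenvalue on the round sphere S^{2d}. Then Q has degree 2d − 1 and the coefficient of t^{2d−2} in Q is zero. -/
import Mathlib


open Polynomial

/-- Multiplicity polynomial of the `k`-th Laplace eigenvalue on the even sphere `S^{2d}`:
`R(k) = ((2k+2d-1)/(2d-1)) ∏_{j=1}^{2d-2} (k+j)/j`. -/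
noncomputable def sphereEvenR (d : ℕ) : Polynomial ℚ :=
  C ((2 * (d : ℚ) - 1)⁻¹) * (2 * X + C (2 * (d : ℚ) - 1)) *
    ∏ j ∈ Finset.Icc 1 (2 * d - 2), C ((j : ℚ)⁻¹) * (X + C ((j : ℚ)))

/-- The shifted multiplicity polynomial
`Q(t) = (2t/(2d-1)) ∏_{j=1}^{2d-2} (t + j - (2d-1)/2)/j` for the even sphere `S^{2d}`. -/
noncomputable def sphereEvenQ (d : ℕ) : Polynomial ℚ :=
  C (2 * (2 * (d : ℚ) - 1)⁻¹) * X *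
    ∏ j ∈ Finset.Icc 1 (2 * d - 2),
      C ((j : ℚ)⁻¹) * (X + C ((j : ℚ) - (2 * (d : ℚ) - 1) / 2))

lemma sumIccCast (n : ℕ) : ∑ j ∈ Finset.Icc 1 n, (j : ℚ) = n * (n + 1) / 2 := by
  induction n with
  | zero => simp
  | succ m ih =>
    rw [Finset.sum_Icc_succ_top (by omega), ih]
    push_cast; ring

/-- For `d ≥ 1`, the polynomial `Q(t) = (2t/(2d-1)) ∏_{j=1}^{2d-2} (t + j - (2d-1)/2)/j`
equals `R(t - (2d-1)/2)` where `R` is the multiplicity polynomial of the even sphere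
`S^{2d}`; it has degree `2d - 1` and its coefficient of `t^{2d-2}` is zero. -/
theorem sphereEven_W_condition (d : ℕ) (hd : 1 ≤ d) :
    sphereEvenQ d = (sphereEvenR d).comp (X - C ((2 * (d : ℚ) - 1) / 2)) ∧
    (sphereEvenQ d).natDegree = 2 * d - 1 ∧
    (sphereEvenQ d).coeff (2 * d - 2) = 0 := by
  have hd1 : (1 : ℚ) ≤ (d : ℚ) := by exact_mod_cast hd
  have hA : (2 * (d : ℚ) - 1) ≠ 0 := by intro h; nlinarith
  set c : ℚ := (2 * (d : ℚ) - 1) / 2 with hc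
  -- rewrite Q as a constant times X times a monic product
  set P : Polynomial ℚ := ∏ j ∈ Finset.Icc 1 (2 * d - 2), (X + C ((j : ℚ) - c)) with hP
  set K : ℚ := 2 * (2 * (d : ℚ) - 1)⁻¹ * ∏ j ∈ Finset.Icc 1 (2 * d - 2), (j : ℚ)⁻¹ with hK
  have hQ : sphereEvenQ d = C K * (X * P) := by
    rw [sphereEvenQ, hK, hP, Finset.prod_mul_distrib, ← map_prod]
    simp only [C_mul]
    ring
  have hKne : K ≠ 0 := by
    apply mul_ne_zero (mul_ne_zero two_ne_zero (inv_ne_zero hA))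
    rw [Finset.prod_ne_zero_iff]
    intro j hj
    have : 1 ≤ j := (Finset.mem_Icc.mp hj).1
    positivity
  have monicP : P.Monic := monic_prod_of_monic _ _ fun j _ => monic_X_add_C _
  have hdegP : P.natDegree = 2 * d - 2 := by
    rw [hP, natDegree_prod _ _ fun j _ => (monic_X_add_C _).ne_zero,
      Finset.sum_congr rfl fun j _ => natDegree_X_add_C _, Finset.sum_const,
      smul_eq_mul, mul_one, Nat.card_Icc]
    omega
  have monicXP : (X * P).Monic := monic_X.mul monicP
  have hdegXP : (X * P).natDegree = 2 * d - 1 := by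
    rw [natDegree_mul X_ne_zero monicP.ne_zero, natDegree_X, hdegP]; omega
  refine ⟨?_, ?_, ?_⟩
  · rw [sphereEvenR, mul_comp, mul_comp, add_comp, mul_comp, C_comp, C_comp, X_comp,
      prod_comp]
    have hfac : ∀ j ∈ Finset.Icc 1 (2 * d - 2),
        (C ((j : ℚ)⁻¹) * (X + C ((j : ℚ)))).comp (X - C c)
          = C ((j : ℚ)⁻¹) * (X + C ((j : ℚ) - c)) := by
      intro j hj
      rw [mul_comp, add_comp, C_comp, C_comp, X_comp, C_sub]
      ring
    rw [Finset.prod_congr rfl hfac, sphereEvenQ]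
    have h2 : (2 : Polynomial ℚ).comp (X - C c) = 2 := by simp
    rw [h2]
    have hpre : C ((2 * (d : ℚ) - 1)⁻¹) * (2 * (X - C c) + C (2 * (d : ℚ) - 1))
        = C (2 * (2 * (d : ℚ) - 1)⁻¹) * X := by
      have h1 : (2 * (d : ℚ) - 1) = 2 * c := by rw [hc]; ring
      rw [h1]
      simp only [C_mul, map_ofNat]
      ring
    rw [hpre]
  · rw [hQ, natDegree_C_mul hKne, hdegXP]
  · rw [hQ, coeff_C_mul]
    have hpos : 0 < (X * P).natDegree := by omega
    have hco : (X * P).coeff (2 * d - 2) = (X * P).nextCoeff := by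
      rw [nextCoeff_of_natDegree_pos hpos, hdegXP,
        show 2 * d - 1 - 1 = 2 * d - 2 from by omega]
    rw [hco, Monic.nextCoeff_mul monic_X monicP]
    have hX : (X : Polynomial ℚ).nextCoeff = 0 := by simp [nextCoeff]
    have hPnext : P.nextCoeff = ∑ j ∈ Finset.Icc 1 (2 * d - 2), ((j : ℚ) - c) := by
      rw [hP, Monic.nextCoeff_prod _ _ fun j _ => monic_X_add_C _]
      exact Finset.sum_congr rfl fun j _ => nextCoeff_X_add_C _
    have hsum : ∑ j ∈ Finset.Icc 1 (2 * d - 2), ((j : ℚ) - c) = 0 := by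
      rw [Finset.sum_sub_distrib, sumIccCast, Finset.sum_const, Nat.card_Icc,
        nsmul_eq_mul, show 2 * d - 2 + 1 - 1 = 2 * d - 2 from by omega,
        Nat.cast_sub (by omega : 2 ≤ 2 * d), hc]
      push_cast
      ring
    rw [hX, hPnext, hsum, zero_add, mul_zero]
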